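/- Let Ṽ : C(S^{n-1})⁺ → [0,∞) be a positive, rotation invariant, radial continuous valuation with Ṽ(0) = 0, let λ > 0, and let ζ_λ be defined on compact subsets of S^{n-1} by ζ_λ(K) = inf{Ṽ(f) : f : S^{n-1} → [0,λ] continuous, f = λ on K}. Then ζ_λ is a regular content: for every compact set K ⊆ S^{n-1}, ζ_λ(K) = inf{ζ_λ(D) : D ⊆ S^{n-1} compact, K ⊆ interior(D)}. -/

import Mathlib

open MeasureTheory Metric Set
open scoped ENNReal

noncomputable section

/-- The unit sphere `S^{n-1}` in `ℝ^n`. -/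
abbrev Sph (n : ℕ) := Metric.sphere (0 : EuclideanSpace ℝ (Fin n)) 1

/-- The Lebesgue (rotation-invariant surface) measure `m` on the unit sphere `S^{n-1}`. -/
def sphMeasure (n : ℕ) : Measure (Sph n) :=
  (volume : Measure (EuclideanSpace ℝ (Fin n))).toSphere

/-- The self-map of the sphere `S^{n-1}` induced by a linear isometry of `ℝ^n`. -/
def rotMap {n : ℕ} (φ : EuclideanSpace ℝ (Fin n) ≃ₗᵢ[ℝ] EuclideanSpace ℝ (Fin n)) :
    C(Sph n, Sph n) where
  toFun x := ⟨φ x, by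
    have hx := x.2
    simp only [mem_sphere_iff_norm, sub_zero] at hx ⊢
    simp [φ.norm_map, hx]⟩
  continuous_toFun := by
    apply Continuous.subtype_mk
    exact φ.continuous.comp continuous_subtype_val

/-- A rotation of `S^{n-1}`: a linear isometry of `ℝ^n` with determinant `1`, i.e. the
restriction of an element of `SO(n)`. -/
def IsRotation {n : ℕ} (φ : EuclideanSpace ℝ (Fin n) ≃ₗᵢ[ℝ] EuclideanSpace ℝ (Fin n)) : Prop :=
  LinearMap.det (φ.toLinearEquiv : EuclideanSpace ℝ (Fin n) →ₗ[ℝ] EuclideanSpace ℝ (Fin n)) = 1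

/-- The content `ζ_λ` associated to a valuation `V` on `C(S^{n-1})⁺`:
`ζ_λ(K) = inf{V(f) : f : S^{n-1} → [0,λ] continuous, f = λ on K}`. -/
def zeta {n : ℕ} (V : C(Sph n, ℝ) → ℝ) (lam : ℝ) (K : Set (Sph n)) : ℝ :=
  sInf (V '' {f : C(Sph n, ℝ) | (∀ x, f x ∈ Set.Icc 0 lam) ∧ ∀ x ∈ K, f x = lam})


/-!
Given a test function `f` for `K`, the truncated dilations `g_t = min λ ((1 + t) f)` converge
to `f` as `t → 0⁺`, and `g_t` is a test function for the compact set `D_t = {λ ≤ (1 + t) f}`,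
whose interior contains `{λ < (1 + t) f} ⊇ K`. Hence `ζ_λ(D_t) ≤ V(g_t) → V(f)`.
-/

open Filter Topology

section TruncScale

variable {X : Type*} [TopologicalSpace X]

def truncScale (lam : ℝ) (f : C(X, ℝ)) : C(ℝ, C(X, ℝ)) :=
  ContinuousMap.curry ⟨fun p => min lam ((1 + p.1) * f p.2), by fun_prop⟩

@[simp]
lemma truncScale_apply (lam : ℝ) (f : C(X, ℝ)) (t : ℝ) (x : X) :
    truncScale lam f t x = min lam ((1 + t) * f x) :=
  rfl

lemma truncScale_zero {lam : ℝ} {f : C(X, ℝ)} (hf : ∀ x, f x ≤ lam) :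
    truncScale lam f 0 = f := by
  ext x
  simp [hf x]

end TruncScale

section Zeta

variable {n : ℕ}

def zetaAdmissible (lam : ℝ) (K : Set (Sph n)) : Set C(Sph n, ℝ) :=
  {f | (∀ x, f x ∈ Icc 0 lam) ∧ ∀ x ∈ K, f x = lam}

lemma const_mem_zetaAdmissible {lam : ℝ} (hlam : 0 ≤ lam) (K : Set (Sph n)) :
    ContinuousMap.const (Sph n) lam ∈ zetaAdmissible lam K :=
  ⟨fun _ => ⟨hlam, le_rfl⟩, fun _ _ => rfl⟩

lemma zetaAdmissible_anti {lam : ℝ} {K D : Set (Sph n)} (h : K ⊆ D) :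
    zetaAdmissible lam D ⊆ zetaAdmissible lam K :=
  fun _ hf => ⟨hf.1, fun x hx => hf.2 x (h hx)⟩

lemma nonneg_of_mem_zetaAdmissible {lam : ℝ} {K : Set (Sph n)} {f : C(Sph n, ℝ)}
    (hf : f ∈ zetaAdmissible lam K) : 0 ≤ f :=
  fun x => (hf.1 x).1

lemma truncScale_mem_zetaAdmissible {lam t : ℝ} {K : Set (Sph n)} {f : C(Sph n, ℝ)}
    (hf : f ∈ zetaAdmissible lam K) (ht : 0 ≤ t) :
    truncScale lam f t ∈ zetaAdmissible lam {x | lam ≤ (1 + t) * f x} := by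
  refine ⟨fun x => ⟨?_, min_le_left _ _⟩, fun x hx => min_eq_left hx⟩
  obtain ⟨hfx₀, hfx_lam⟩ := hf.1 x
  exact le_min (hfx₀.trans hfx_lam) (by positivity)

lemma subset_interior_superlevel {lam t : ℝ} {K : Set (Sph n)} {f : C(Sph n, ℝ)}
    (hf : f ∈ zetaAdmissible lam K) (hlam : 0 < lam) (ht : 0 < t) :
    K ⊆ interior {x | lam ≤ (1 + t) * f x} := by
  have hopen : IsOpen {x | lam < (1 + t) * f x} :=
    isOpen_lt continuous_const (continuous_const.mul f.continuous)
  refine Subset.trans (fun x hx => ?_)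
    (hopen.subset_interior_iff.mpr fun _ hx => le_of_lt (α := ℝ) hx)
  show lam < (1 + t) * f x
  rw [hf.2 x hx]
  nlinarith

variable {V : C(Sph n, ℝ) → ℝ} (hpos : ∀ f : C(Sph n, ℝ), 0 ≤ f → 0 ≤ V f)
include hpos

lemma zeta_nonneg (lam : ℝ) (K : Set (Sph n)) : 0 ≤ zeta V lam K :=
  Real.sInf_nonneg <| forall_mem_image.2 fun _ hf => hpos _ (nonneg_of_mem_zetaAdmissible hf)

lemma zeta_le {lam : ℝ} {K : Set (Sph n)} {f : C(Sph n, ℝ)} (hf : f ∈ zetaAdmissible lam K) :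
    zeta V lam K ≤ V f :=
  csInf_le ⟨0, forall_mem_image.2 fun _ hg => hpos _ (nonneg_of_mem_zetaAdmissible hg)⟩
    (mem_image_of_mem V hf)

lemma zeta_mono {lam : ℝ} (hlam : 0 ≤ lam) {K D : Set (Sph n)} (h : K ⊆ D) :
    zeta V lam K ≤ zeta V lam D :=
  le_csInf ⟨_, mem_image_of_mem V (const_mem_zetaAdmissible hlam D)⟩ <|
    forall_mem_image.2 fun _ hf => zeta_le hpos (zetaAdmissible_anti h hf)

lemma sInf_zeta_interior_le {lam : ℝ} (hlam : 0 < lam)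
    (hcont : ContinuousOn V {f : C(Sph n, ℝ) | 0 ≤ f})
    {K : Set (Sph n)} {f : C(Sph n, ℝ)} (hf : f ∈ zetaAdmissible lam K) :
    sInf (zeta V lam '' {D : Set (Sph n) | IsCompact D ∧ K ⊆ interior D}) ≤ V f := by
  have hcurve : Tendsto (truncScale lam f) (𝓝[>] 0) (𝓝[{g | 0 ≤ g}] f) := by
    refine tendsto_nhdsWithin_iff.2 ⟨?_, ?_⟩
    · simpa [truncScale_zero fun x => (hf.1 x).2] using
        ((truncScale lam f).continuous.tendsto 0).mono_left nhdsWithin_le_nhds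
    · filter_upwards [self_mem_nhdsWithin] with t ht
      exact nonneg_of_mem_zetaAdmissible (truncScale_mem_zetaAdmissible hf (le_of_lt ht))
  have hVcurve := (hcont f (nonneg_of_mem_zetaAdmissible hf)).tendsto.comp hcurve
  have hbdd : BddBelow (zeta V lam '' {D : Set (Sph n) | IsCompact D ∧ K ⊆ interior D}) :=
    ⟨0, forall_mem_image.2 fun D _ => zeta_nonneg hpos lam D⟩
  refine le_of_forall_pos_lt_add fun ε hε => ?_
  obtain ⟨t, ht, hVt⟩ := (eventually_mem_nhdsWithin.and
    (hVcurve.eventually (gt_mem_nhds (lt_add_of_pos_right (V f) hε)))).exists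
  have hDt : IsCompact {x | lam ≤ (1 + t) * f x} :=
    (isClosed_le continuous_const (continuous_const.mul f.continuous)).isCompact
  calc sInf (zeta V lam '' {D : Set (Sph n) | IsCompact D ∧ K ⊆ interior D})
      ≤ zeta V lam {x | lam ≤ (1 + t) * f x} :=
        csInf_le hbdd (mem_image_of_mem _ ⟨hDt, subset_interior_superlevel hf hlam ht⟩)
    _ ≤ V (truncScale lam f t) := zeta_le hpos (truncScale_mem_zetaAdmissible hf (le_of_lt ht))
    _ < V f + ε := hVt

end Zeta

theorem stmt14_general {n : ℕ} (V : C(Sph n, ℝ) → ℝ)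
    (hpos : ∀ f : C(Sph n, ℝ), 0 ≤ f → 0 ≤ V f)
    (hcont : ContinuousOn V {f : C(Sph n, ℝ) | 0 ≤ f})
    (lam : ℝ) (hlam : 0 < lam)
    (K : Set (Sph n)) :
    zeta V lam K =
      sInf (zeta V lam '' {D : Set (Sph n) | IsCompact D ∧ K ⊆ interior D}) := by
  refine le_antisymm ?_ ?_
  · refine le_csInf ⟨_, mem_image_of_mem _ ⟨isCompact_univ, by simp⟩⟩ ?_
    rintro _ ⟨D, ⟨-, hKD⟩, rfl⟩
    exact zeta_mono hpos hlam.le (hKD.trans interior_subset)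
  · refine le_csInf ⟨_, mem_image_of_mem V (const_mem_zetaAdmissible hlam.le K)⟩ ?_
    rintro _ ⟨f, hf, rfl⟩
    exact sInf_zeta_interior_le hpos hlam hcont hf

/-- the content `ζ_λ` is regular:
`ζ_λ(K) = inf{ζ_λ(D) : D compact, K ⊆ interior(D)}`. -/
theorem stmt14 {n : ℕ} (hn : 2 ≤ n) (V : C(Sph n, ℝ) → ℝ)
    (hpos : ∀ f : C(Sph n, ℝ), 0 ≤ f → 0 ≤ V f)
    (hval : ∀ f g : C(Sph n, ℝ), 0 ≤ f → 0 ≤ g →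
      V (f ⊔ g) + V (f ⊓ g) = V f + V g)
    (hcont : ContinuousOn V {f : C(Sph n, ℝ) | 0 ≤ f})
    (hrot : ∀ φ : EuclideanSpace ℝ (Fin n) ≃ₗᵢ[ℝ] EuclideanSpace ℝ (Fin n), IsRotation φ →
      ∀ f : C(Sph n, ℝ), 0 ≤ f → V (f.comp (rotMap φ)) = V f)
    (hzero : V 0 = 0) (lam : ℝ) (hlam : 0 < lam)
    (K : Set (Sph n)) (hK : IsCompact K) :
    zeta V lam K =
      sInf (zeta V lam '' {D : Set (Sph n) | IsCompact D ∧ K ⊆ interior D}) :=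
  stmt14_general V hpos hcont lam hlam K
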